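/- arXiv:1807.02290 — 2 statements merged into one kernel-verified Lean document; each statement's English description precedes it below -/
import Mathlib

section
/- Let n ≥ 1, M ≥ 0, and let f : 2^[n] → [−M, M] be submodular. For any permutation π of [n] with associated maximal chain B_0 ⊂ B_1 ⊂ ⋯ ⊂ B_n, the greedy vector g of f at π satisfies ‖g‖₂ ≤ ‖g‖₁ = Σ_{j=1}^n |f(B_{π(j)}) − f(B_{π(j)−1})| ≤ 4M. -/
/-- A set function `f : 2^[n] → ℝ` is submodular. -/
def Submodular {n : ℕ} (f : Finset (Fin n) → ℝ) : Prop :=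
  ∀ S' S : Finset (Fin n), S' ⊆ S → ∀ i ∉ S,
    f (insert i S) - f S ≤ f (insert i S') - f S'

/-- The maximal chain associated with a permutation `π` of `[n]`
(`B i = {j : (π j : ℕ) < i}` for `i = 0, 1, …, n`, 0-indexed encoding). -/
def chainSet {n : ℕ} (π : Equiv.Perm (Fin n)) (i : ℕ) : Finset (Fin n) :=
  Finset.univ.filter (fun j => (π j : ℕ) < i)

lemma chainSet_succ {n : ℕ} (π : Equiv.Perm (Fin n)) (k : ℕ) (hk : k < n) :
    chainSet π (k + 1) = insert (π.symm ⟨k, hk⟩) (chainSet π k) := by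
  ext j
  simp only [chainSet, Finset.mem_filter, Finset.mem_univ, true_and, Finset.mem_insert,
    Equiv.eq_symm_apply]
  constructor
  · intro h
    rcases Nat.lt_succ_iff_lt_or_eq.mp h with h | h
    · exact Or.inr h
    · exact Or.inl (by ext; exact h)
  · rintro (h | h)
    · have : (π j : ℕ) = k := by rw [h]
      omega
    · omega

lemma sum_le_aux {n : ℕ} (f : Finset (Fin n) → ℝ) (hf : Submodular f)
    (π : Equiv.Perm (Fin n)) (g : Fin n → ℝ)
    (hg : ∀ j, g j = f (chainSet π ((π j : ℕ) + 1)) - f (chainSet π (π j : ℕ)))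
    (A : Finset (Fin n)) :
    ∑ j ∈ A, g j ≤ f A - f ∅ := by
  have key : ∀ k, k ≤ n →
      ∑ j ∈ A.filter (fun j => (π j : ℕ) < k), g j ≤ f (A ∩ chainSet π k) - f ∅ := by
    intro k
    induction k with
    | zero =>
      intro _
      have h1 : A.filter (fun j => (π j : ℕ) < 0) = ∅ := by
        apply Finset.filter_false_of_mem; intro x _; omega
      have h2 : A ∩ chainSet π 0 = ∅ := by
        ext x; simp [chainSet]
      simp [h1, h2]
    | succ k ih =>
      intro hk
      have hk' : k < n := hk
      set j0 := π.symm ⟨k, hk'⟩ with hj0def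
      have hπj0 : (π j0 : ℕ) = k := by simp [hj0def]
      have hchain := chainSet_succ π k hk'
      by_cases hj0 : j0 ∈ A
      · have hfilter : A.filter (fun j => (π j : ℕ) < k + 1)
            = insert j0 (A.filter (fun j => (π j : ℕ) < k)) := by
          ext j
          simp only [Finset.mem_filter, Finset.mem_insert]
          constructor
          · rintro ⟨hjA, hjk⟩
            rcases Nat.lt_succ_iff_lt_or_eq.mp hjk with h | h
            · exact Or.inr ⟨hjA, h⟩
            · left
              rw [hj0def, Equiv.eq_symm_apply]
              ext; exact h
          · rintro (h | ⟨h1, h2⟩)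
            · subst h; exact ⟨hj0, by omega⟩
            · exact ⟨h1, by omega⟩
        have hinter : A ∩ chainSet π (k + 1) = insert j0 (A ∩ chainSet π k) := by
          rw [hchain, Finset.inter_insert_of_mem hj0]
        have hnotmem : j0 ∉ A.filter (fun j => (π j : ℕ) < k) := by
          simp [hπj0]
        have hnot2 : j0 ∉ chainSet π k := by
          simp [chainSet, hπj0]
        have hnot3 : j0 ∉ A ∩ chainSet π k := by
          simp [hnot2]
        have hsub : A ∩ chainSet π k ⊆ chainSet π k := Finset.inter_subset_right
        have hsm := hf (A ∩ chainSet π k) (chainSet π k) hsub j0 hnot2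
        have hgj0 : g j0 = f (insert j0 (chainSet π k)) - f (chainSet π k) := by
          rw [hg j0, hπj0, hchain]
        have h2 := ih (le_of_lt hk')
        rw [hfilter, Finset.sum_insert hnotmem, hinter]
        linarith
      · have hfilter : A.filter (fun j => (π j : ℕ) < k + 1)
            = A.filter (fun j => (π j : ℕ) < k) := by
          ext j
          simp only [Finset.mem_filter]
          constructor
          · rintro ⟨hjA, hjk⟩
            refine ⟨hjA, ?_⟩
            rcases Nat.lt_succ_iff_lt_or_eq.mp hjk with h | h
            · exact h
            · exfalso
              apply hj0
              have : j = j0 := by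
                rw [hj0def, Equiv.eq_symm_apply]; ext; exact h
              rwa [← this]
          · rintro ⟨h1, h2⟩; exact ⟨h1, by omega⟩
        have hinter : A ∩ chainSet π (k + 1) = A ∩ chainSet π k := by
          rw [hchain, Finset.inter_insert_of_notMem hj0]
        rw [hfilter, hinter]
        exact ih (le_of_lt hk')
  have hfin := key n le_rfl
  have h1 : A.filter (fun j => (π j : ℕ) < n) = A := by
    apply Finset.filter_true_of_mem; intro x _; exact (π x).isLt
  have h2 : A ∩ chainSet π n = A := by
    have : chainSet π n = Finset.univ := by
      apply Finset.filter_true_of_mem; intro x _; exact (π x).isLt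
    rw [this, Finset.inter_univ]
  rwa [h1, h2] at hfin

lemma le_sum_aux {n : ℕ} (f : Finset (Fin n) → ℝ) (hf : Submodular f)
    (π : Equiv.Perm (Fin n)) (g : Fin n → ℝ)
    (hg : ∀ j, g j = f (chainSet π ((π j : ℕ) + 1)) - f (chainSet π (π j : ℕ)))
    (A : Finset (Fin n)) :
    f Finset.univ - f (Finset.univ \ A) ≤ ∑ j ∈ A, g j := by
  have key : ∀ k, k ≤ n →
      f (Finset.univ \ A.filter (fun j => k ≤ (π j : ℕ))) - f (Finset.univ \ A)
        ≤ ∑ j ∈ A.filter (fun j => (π j : ℕ) < k), g j := by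
    intro k
    induction k with
    | zero =>
      intro _
      have h1 : A.filter (fun j => 0 ≤ (π j : ℕ)) = A := by
        apply Finset.filter_true_of_mem; intro x _; omega
      have h2 : A.filter (fun j => (π j : ℕ) < 0) = ∅ := by
        apply Finset.filter_false_of_mem; intro x _; omega
      simp [h1, h2]
    | succ k ih =>
      intro hk
      have hk' : k < n := hk
      set j0 := π.symm ⟨k, hk'⟩ with hj0def
      have hπj0 : (π j0 : ℕ) = k := by simp [hj0def]
      have hchain := chainSet_succ π k hk'
      by_cases hj0 : j0 ∈ A
      · have hVstep : Finset.univ \ A.filter (fun j => k + 1 ≤ (π j : ℕ))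
            = insert j0 (Finset.univ \ A.filter (fun j => k ≤ (π j : ℕ))) := by
          ext j
          simp only [Finset.mem_sdiff, Finset.mem_univ, true_and, Finset.mem_filter,
            Finset.mem_insert, not_and, not_le]
          constructor
          · intro h
            by_cases hjA : j ∈ A
            · have hjk := h hjA
              by_cases hje : j = j0
              · exact Or.inl hje
              · right
                intro _
                have : (π j : ℕ) ≠ k := by
                  intro hc
                  apply hje
                  rw [hj0def, Equiv.eq_symm_apply]; ext; exact hc
                omega
            · exact Or.inr (fun h' => absurd h' hjA)
          · rintro (h | h)
            · subst h; intro _; omega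
            · intro hjA
              have := h hjA
              omega
        have hnotmemV : j0 ∉ Finset.univ \ A.filter (fun j => k ≤ (π j : ℕ)) := by
          simp [hj0, hπj0]
        have hsubV : chainSet π k ⊆ Finset.univ \ A.filter (fun j => k ≤ (π j : ℕ)) := by
          intro x hx
          simp only [chainSet, Finset.mem_filter, Finset.mem_univ, true_and] at hx
          simp only [Finset.mem_sdiff, Finset.mem_univ, true_and, Finset.mem_filter, not_and,
            not_le]
          intro _
          omega
        have hnot2 : j0 ∉ chainSet π k := by simp [chainSet, hπj0]
        have hsm := hf (chainSet π k) (Finset.univ \ A.filter (fun j => k ≤ (π j : ℕ)))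
          hsubV j0 hnotmemV
        have hgj0 : g j0 = f (insert j0 (chainSet π k)) - f (chainSet π k) := by
          rw [hg j0, hπj0, hchain]
        have hfilter : A.filter (fun j => (π j : ℕ) < k + 1)
            = insert j0 (A.filter (fun j => (π j : ℕ) < k)) := by
          ext j
          simp only [Finset.mem_filter, Finset.mem_insert]
          constructor
          · rintro ⟨hjA, hjk⟩
            rcases Nat.lt_succ_iff_lt_or_eq.mp hjk with h | h
            · exact Or.inr ⟨hjA, h⟩
            · left
              rw [hj0def, Equiv.eq_symm_apply]
              ext; exact h
          · rintro (h | ⟨h1, h2⟩)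
            · subst h; exact ⟨hj0, by omega⟩
            · exact ⟨h1, by omega⟩
        have hnotmem : j0 ∉ A.filter (fun j => (π j : ℕ) < k) := by simp [hπj0]
        have h2 := ih (le_of_lt hk')
        rw [hVstep, hfilter, Finset.sum_insert hnotmem]
        linarith
      · have hVstep : Finset.univ \ A.filter (fun j => k + 1 ≤ (π j : ℕ))
            = Finset.univ \ A.filter (fun j => k ≤ (π j : ℕ)) := by
          ext j
          simp only [Finset.mem_sdiff, Finset.mem_univ, true_and, Finset.mem_filter, not_and,
            not_le]
          constructor
          · intro h hjA
            have := h hjA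
            have : (π j : ℕ) ≠ k := by
              intro hc
              apply hj0
              have : j = j0 := by rw [hj0def, Equiv.eq_symm_apply]; ext; exact hc
              rwa [← this]
            omega
          · intro h hjA
            have := h hjA
            omega
        have hfilter : A.filter (fun j => (π j : ℕ) < k + 1)
            = A.filter (fun j => (π j : ℕ) < k) := by
          ext j
          simp only [Finset.mem_filter]
          constructor
          · rintro ⟨hjA, hjk⟩
            refine ⟨hjA, ?_⟩
            rcases Nat.lt_succ_iff_lt_or_eq.mp hjk with h | h
            · exact h
            · exfalso
              apply hj0
              have : j = j0 := by rw [hj0def, Equiv.eq_symm_apply]; ext; exact h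
              rwa [← this]
          · rintro ⟨h1, h2⟩; exact ⟨h1, by omega⟩
        rw [hVstep, hfilter]
        exact ih (le_of_lt hk')
  have hfin := key n le_rfl
  have h1 : A.filter (fun j => (π j : ℕ) < n) = A := by
    apply Finset.filter_true_of_mem; intro x _; exact (π x).isLt
  have h2 : A.filter (fun j => n ≤ (π j : ℕ)) = ∅ := by
    apply Finset.filter_false_of_mem; intro x _; have := (π x).isLt; omega
  rw [h1, h2, Finset.sdiff_empty] at hfin
  exact hfin

/-- The greedy vector `g` of a submodular `f : 2^[n] → [−M,M]` at any permutation `π`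
satisfies `‖g‖₂ ≤ ‖g‖₁ = Σⱼ |f(B_{π(j)}) − f(B_{π(j)−1})| ≤ 4M`. -/
theorem stmt2 {n : ℕ} (hn : 1 ≤ n) (M : ℝ) (hM : 0 ≤ M)
    (f : Finset (Fin n) → ℝ) (hf : Submodular f)
    (hrange : ∀ S : Finset (Fin n), f S ∈ Set.Icc (-M) M)
    (π : Equiv.Perm (Fin n))
    (g : Fin n → ℝ)
    (hg : ∀ j, g j = f (chainSet π ((π j : ℕ) + 1)) - f (chainSet π (π j : ℕ))) :
    Real.sqrt (∑ j, (g j) ^ 2) ≤ ∑ j, |g j| ∧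
    (∑ j, |g j|) = ∑ j, |f (chainSet π ((π j : ℕ) + 1)) - f (chainSet π (π j : ℕ))| ∧
    (∑ j, |g j|) ≤ 4 * M := by
  refine ⟨?_, ?_, ?_⟩
  · have h1 : ∑ j, (g j) ^ 2 ≤ (∑ j, |g j|) ^ 2 := by
      calc ∑ j, (g j) ^ 2 = ∑ j, |g j| ^ 2 := by simp [sq_abs]
        _ ≤ (∑ j, |g j|) ^ 2 :=
          Finset.sum_sq_le_sq_sum_of_nonneg (fun i _ => abs_nonneg _)
    calc Real.sqrt (∑ j, (g j) ^ 2) ≤ Real.sqrt ((∑ j, |g j|) ^ 2) := Real.sqrt_le_sqrt h1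
      _ = ∑ j, |g j| := Real.sqrt_sq (Finset.sum_nonneg fun i _ => abs_nonneg _)
  · exact Finset.sum_congr rfl fun j _ => by rw [hg j]
  · set P := Finset.univ.filter (fun j => 0 < g j) with hP
    set N := Finset.univ.filter (fun j => ¬ 0 < g j) with hN
    have hsplit : ∑ j, |g j| = (∑ j ∈ P, g j) - ∑ j ∈ N, g j := by
      rw [← Finset.sum_filter_add_sum_filter_not Finset.univ (fun j => 0 < g j)
        (fun j => |g j|)]
      have e1 : ∑ j ∈ P, |g j| = ∑ j ∈ P, g j := by
        apply Finset.sum_congr rfl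
        intro j hj
        simp only [hP, Finset.mem_filter] at hj
        exact abs_of_pos hj.2
      have e2 : ∑ j ∈ N, |g j| = -∑ j ∈ N, g j := by
        rw [← Finset.sum_neg_distrib]
        apply Finset.sum_congr rfl
        intro j hj
        simp only [hN, Finset.mem_filter] at hj
        exact abs_of_nonpos (le_of_not_gt hj.2)
      rw [e1, e2]
      ring
    have hup := sum_le_aux f hf π g hg P
    have hlo := le_sum_aux f hf π g hg N
    have r1 := hrange P
    have r2 := hrange ∅
    have r3 := hrange Finset.univ
    have r4 := hrange (Finset.univ \ N)
    simp only [Set.mem_Icc] at r1 r2 r3 r4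
    rw [hsplit]
    linarith
end

section
/- Let n ≥ 1, M ≥ 0, and let f : 2^[n] → [−M, M] be submodular. Then the Lovasz extension f̂ is 4M-Lipschitz with respect to the Euclidean norm on the cube: |f̂(x) − f̂(y)| ≤ 4M ‖x − y‖₂ for all x, y ∈ [0,1]^n. -/
/-- The Lovasz extension `f̂(x) = ∫₀¹ f({i : x_i ≥ τ}) dτ`. -/
noncomputable def lovasz {n : ℕ} (f : Finset (Fin n) → ℝ) (x : Fin n → ℝ) : ℝ :=
  ∫ τ in (0:ℝ)..(1:ℝ), f (Finset.univ.filter (fun i => τ ≤ x i))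

open Finset MeasureTheory

section

variable {n : ℕ}

def marginal (f : Finset (Fin n) → ℝ) (S : Finset (Fin n)) (i : Fin n) : ℝ :=
  f (insert i S) - f S

lemma Submodular.marginal_le {f : Finset (Fin n) → ℝ} (hf : Submodular f) {S' S : Finset (Fin n)}
    (hS : S' ⊆ S) {i : Fin n} (hi : i ∉ S) : marginal f S i ≤ marginal f S' i :=
  hf S' S hS i hi

lemma Submodular.comp_compl {f : Finset (Fin n) → ℝ} (hf : Submodular f) :
    Submodular fun S => f Sᶜ := by
  intro S' S hS i hi
  have hi' : i ∉ S' := fun h => hi (hS h)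
  have key := hf.marginal_le (erase_subset_erase i (compl_subset_compl.2 hS)) (notMem_erase i S'ᶜ)
  rw [marginal, marginal, insert_erase (mem_compl.2 hi), insert_erase (mem_compl.2 hi')] at key
  simp only [compl_insert]
  linarith

section Chain

variable {α : Type*} [LinearOrder α] (r : Fin n → α)

def above (i : Fin n) : Finset (Fin n) :=
  univ.filter fun j => r i < r j

variable {r}

@[simp]
lemma mem_above {i j : Fin n} : j ∈ above r i ↔ r i < r j := by
  simp [above]

lemma notMem_above (i : Fin n) : i ∉ above r i := by
  simp

lemma sub_eq_sum_marginal (hr : Function.Injective r) (f : Finset (Fin n) → ℝ)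
    (B D : Finset (Fin n)) :
    f (B ∪ D) - f B = ∑ i ∈ D, marginal f (B ∪ (D ∩ above r i)) i := by
  induction D using Finset.induction_on_min_value r with
  | empty => simp
  | insert a D haD hmin ih =>
    have hlt : ∀ i ∈ D, r a < r i := fun i hi =>
      (hmin i hi).lt_of_ne (hr.ne fun h => haD (h ▸ hi))
    have h_a : insert a D ∩ above r a = D := by
      ext j
      simp only [mem_inter, mem_insert, mem_above]
      constructor
      · rintro ⟨rfl | hj, hlt'⟩
        · exact absurd hlt' (lt_irrefl _)
        · exact hj
      · exact fun hj => ⟨Or.inr hj, hlt j hj⟩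
    have h_i : ∀ i ∈ D, insert a D ∩ above r i = D ∩ above r i := fun i hi => by
      rw [insert_inter_of_notMem]
      simpa using (hlt i hi).le
    rw [sum_insert haD, sum_congr rfl fun i hi => by rw [h_i i hi], ← ih, h_a, marginal,
      union_insert]
    ring

lemma sub_le_sum_marginal_above (hr : Function.Injective r) {f : Finset (Fin n) → ℝ}
    (hf : Submodular f) {B D : Finset (Fin n)} (hBD : Disjoint B D)
    (hD : ∀ i ∈ D, above r i ⊆ B ∪ D) :
    f (B ∪ D) - f B ≤ ∑ i ∈ D, marginal f (above r i) i := by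
  rw [sub_eq_sum_marginal hr]
  refine sum_le_sum fun i hi => hf.marginal_le (fun j hj => ?_) ?_
  · rcases mem_union.1 (hD i hi hj) with hjB | hjD
    · exact mem_union_left _ hjB
    · exact mem_union_right _ (mem_inter.2 ⟨hjD, hj⟩)
  · simp only [mem_union, mem_inter, not_or]
    exact ⟨disjoint_right.1 hBD hi, fun h => notMem_above i h.2⟩

lemma sum_marginal_above_le (hr : Function.Injective r) {f : Finset (Fin n) → ℝ}
    (hf : Submodular f) (Q : Finset (Fin n)) :
    ∑ i ∈ Q, marginal f (above r i) i ≤ f Q - f ∅ := by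
  calc ∑ i ∈ Q, marginal f (above r i) i
      ≤ ∑ i ∈ Q, marginal f (∅ ∪ (Q ∩ above r i)) i :=
        sum_le_sum fun i _ => hf.marginal_le (by simp) (notMem_above i)
    _ = f Q - f ∅ := by rw [← sub_eq_sum_marginal hr, empty_union]

lemma sum_posPart_marginal_above_le (hr : Function.Injective r) {f : Finset (Fin n) → ℝ}
    (hf : Submodular f) {M : ℝ} (hrange : ∀ S, f S ∈ Set.Icc (-M) M) :
    ∑ i, (marginal f (above r i) i)⁺ ≤ 2 * M := by
  set P := univ.filter fun i => 0 ≤ marginal f (above r i) i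
  have hP : ∑ i, (marginal f (above r i) i)⁺ = ∑ i ∈ P, marginal f (above r i) i := by
    rw [sum_filter]
    refine sum_congr rfl fun i _ => ?_
    split_ifs with h
    · exact posPart_eq_self.2 h
    · exact posPart_eq_zero.2 (not_le.1 h).le
  linarith [sum_marginal_above_le hr hf P, (hrange P).2, (hrange ∅).1]

end Chain

noncomputable def superlevel (x : Fin n → ℝ) (τ : ℝ) : Finset (Fin n) :=
  univ.filter fun i => τ ≤ x i

@[simp]
lemma mem_superlevel {x : Fin n → ℝ} {τ : ℝ} {i : Fin n} : i ∈ superlevel x τ ↔ τ ≤ x i := by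
  simp [superlevel]

lemma lovasz_eq_integral_superlevel (f : Finset (Fin n) → ℝ) (x : Fin n → ℝ) :
    lovasz f x = ∫ τ in (0:ℝ)..1, f (superlevel x τ) :=
  rfl

lemma measurable_comp_superlevel (f : Finset (Fin n) → ℝ) (x : Fin n → ℝ) :
    Measurable fun τ => f (superlevel x τ) := by
  classical
  have h_pred : Measurable fun τ : ℝ => fun i => τ ≤ x i :=
    measurable_pi_lambda _ fun i => measurableSet_setOfPred.1 measurableSet_Iic
  have h_disc : Measurable fun p : Fin n → Prop => f (univ.filter p) := Measurable.of_discrete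
  convert h_disc.comp h_pred using 3
  simp only [superlevel, Function.comp_apply]

lemma intervalIntegrable_comp_superlevel (f : Finset (Fin n) → ℝ) (x : Fin n → ℝ) (a b : ℝ) :
    IntervalIntegrable (fun τ => f (superlevel x τ)) volume a b := by
  rw [intervalIntegrable_iff]
  have : IsFiniteMeasure (volume.restrict (Set.uIoc a b)) :=
    isFiniteMeasure_restrict.2 measure_Ioc_lt_top.ne
  refine Integrable.of_bound (measurable_comp_superlevel f x).aestronglyMeasurable
    (∑ S, ‖f S‖) (ae_of_all _ fun τ => ?_)
  exact single_le_sum (f := fun S => ‖f S‖) (fun S _ => norm_nonneg _) (mem_univ _)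

lemma intervalIntegral_indicator_Ioc_le {a b : ℝ} (hab : a ≤ b) {c : ℝ} (hc : 0 ≤ c) :
    ∫ τ in (0:ℝ)..1, (Set.Ioc a b).indicator (fun _ => c) τ ≤ c * (b - a) := by
  rw [intervalIntegral.integral_of_le zero_le_one, setIntegral_indicator measurableSet_Ioc,
    setIntegral_const, smul_eq_mul, mul_comm, ← Real.volume_real_Ioc_of_le hab]
  exact mul_le_mul_of_nonneg_left (measureReal_mono Set.inter_subset_right measure_Ioc_lt_top.ne) hc

def sortKey (x : Fin n → ℝ) (i : Fin n) : ℝ ×ₗ Fin n :=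
  toLex (x i, i)

lemma sortKey_injective (x : Fin n → ℝ) : Function.Injective (sortKey x) :=
  fun _ _ h => congrArg (fun p => (ofLex p).2) h

lemma le_of_mem_above_sortKey {x : Fin n → ℝ} {i j : Fin n} (h : j ∈ above (sortKey x) i) :
    x i ≤ x j :=
  Prod.Lex.monotone_fst _ _ (mem_above.1 h).le

lemma superlevel_sub_le_sum_indicator {f : Finset (Fin n) → ℝ} (hf : Submodular f) {x z : Fin n → ℝ}
    (hzx : z ≤ x) (τ : ℝ) :
    f (superlevel x τ) - f (superlevel z τ) ≤
      ∑ i, (Set.Ioc (z i) (x i)).indicator (fun _ => (marginal f (above (sortKey x) i) i)⁺) τ := by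
  set D := univ.filter fun i => τ ∈ Set.Ioc (z i) (x i)
  have hBD : superlevel z τ ∪ D = superlevel x τ := by
    ext i
    simp only [D, mem_union, mem_superlevel, mem_filter, mem_univ, true_and, Set.mem_Ioc]
    refine ⟨fun h => h.elim (·.trans (hzx i)) (·.2), fun h => ?_⟩
    exact (le_or_gt τ (z i)).imp_right (⟨·, h⟩)
  have hdisj : Disjoint (superlevel z τ) D := by
    rw [disjoint_left]
    intro i hiB hiD
    exact not_le.2 (mem_filter.1 hiD).2.1 (mem_superlevel.1 hiB)
  have habove : ∀ i ∈ D, above (sortKey x) i ⊆ superlevel z τ ∪ D := fun i hi j hj => by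
    rw [hBD, mem_superlevel]
    exact (mem_filter.1 hi).2.2.trans (le_of_mem_above_sortKey hj)
  calc f (superlevel x τ) - f (superlevel z τ)
      ≤ ∑ i ∈ D, marginal f (above (sortKey x) i) i := by
        rw [← hBD]
        exact sub_le_sum_marginal_above (sortKey_injective x) hf hdisj habove
    _ ≤ ∑ i ∈ D, (marginal f (above (sortKey x) i) i)⁺ :=
        sum_le_sum fun i _ => le_posPart _
    _ = _ := by
        simp only [D, sum_filter, Set.indicator_apply]

lemma lovasz_sub_le_of_le {f : Finset (Fin n) → ℝ} (hf : Submodular f) {M : ℝ}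
    (hrange : ∀ S, f S ∈ Set.Icc (-M) M) {x z : Fin n → ℝ} (hzx : z ≤ x) :
    lovasz f x - lovasz f z ≤ 2 * M * ‖x - z‖ := by
  set c := fun i => (marginal f (above (sortKey x) i) i)⁺
  have h_ind : ∀ i, IntervalIntegrable ((Set.Ioc (z i) (x i)).indicator fun _ => c i) volume 0 1 :=
    fun i => (intervalIntegrable_iff.2 <| (integrableOn_const measure_Ioc_lt_top.ne).indicator
      measurableSet_Ioc)
  calc lovasz f x - lovasz f z
      = ∫ τ in (0:ℝ)..1, (f (superlevel x τ) - f (superlevel z τ)) :=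
        (intervalIntegral.integral_sub (intervalIntegrable_comp_superlevel f x 0 1)
          (intervalIntegrable_comp_superlevel f z 0 1)).symm
    _ ≤ ∫ τ in (0:ℝ)..1, ∑ i, (Set.Ioc (z i) (x i)).indicator (fun _ => c i) τ :=
        intervalIntegral.integral_mono_on zero_le_one
          ((intervalIntegrable_comp_superlevel f x 0 1).sub
            (intervalIntegrable_comp_superlevel f z 0 1))
          (by simpa only [← Finset.sum_apply] using IntervalIntegrable.sum univ fun i _ => h_ind i)
          fun τ _ => superlevel_sub_le_sum_indicator hf hzx τ
    _ = ∑ i, ∫ τ in (0:ℝ)..1, (Set.Ioc (z i) (x i)).indicator (fun _ => c i) τ :=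
        intervalIntegral.integral_finsetSum fun i _ => h_ind i
    _ ≤ ∑ i, c i * ‖x - z‖ := sum_le_sum fun i _ =>
        (intervalIntegral_indicator_Ioc_le (hzx i) (posPart_nonneg _)).trans <|
          mul_le_mul_of_nonneg_left ((le_abs_self _).trans (norm_le_pi_norm (x - z) i))
            (posPart_nonneg _)
    _ = (∑ i, c i) * ‖x - z‖ := (sum_mul ..).symm
    _ ≤ 2 * M * ‖x - z‖ := mul_le_mul_of_nonneg_right
        (sum_posPart_marginal_above_le (sortKey_injective x) hf hrange) (norm_nonneg _)

lemma lovasz_comp_compl (f : Finset (Fin n) → ℝ) (x : Fin n → ℝ) :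
    lovasz (fun S => f Sᶜ) (1 - x) = lovasz f x := by
  set g := fun σ : ℝ => f (univ.filter fun i => σ < x i)
  have h_compl : ∀ τ, (superlevel (1 - x) τ)ᶜ = univ.filter fun i => 1 - τ < x i := fun τ => by
    ext i
    simp only [mem_compl, mem_superlevel, mem_filter, mem_univ, true_and, Pi.sub_apply,
      Pi.one_apply, not_le]
    constructor <;> intro h <;> linarith
  -- strict and non-strict superlevel sets differ only at the finitely many values `x i`
  have h_ae : ∀ᵐ σ : ℝ, g σ = f (superlevel x σ) := by
    filter_upwards [(Set.finite_range x).countable.ae_notMem volume] with σ hσ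
    refine congrArg f ?_
    ext i
    simp only [mem_filter, mem_univ, true_and, mem_superlevel]
    exact ⟨le_of_lt, fun h => h.lt_of_ne fun h' => hσ ⟨i, h'.symm⟩⟩
  calc lovasz (fun S => f Sᶜ) (1 - x)
      = ∫ τ in (0:ℝ)..1, g (1 - τ) := by
        simp only [lovasz_eq_integral_superlevel, h_compl, g]
    _ = ∫ σ in (0:ℝ)..1, g σ := by
        simp [intervalIntegral.integral_comp_sub_left g 1]
    _ = lovasz f x := intervalIntegral.integral_congr_ae (h_ae.mono fun σ h _ => h)

lemma neg_le_lovasz_sub_of_le {f : Finset (Fin n) → ℝ} (hf : Submodular f) {M : ℝ}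
    (hrange : ∀ S, f S ∈ Set.Icc (-M) M) {x z : Fin n → ℝ} (hzx : z ≤ x) :
    -(2 * M * ‖x - z‖) ≤ lovasz f x - lovasz f z := by
  have h := lovasz_sub_le_of_le hf.comp_compl (fun S => hrange Sᶜ) (sub_le_sub_left hzx 1)
  rw [lovasz_comp_compl, lovasz_comp_compl, sub_sub_sub_cancel_left] at h
  linarith

lemma norm_sub_inf_le {ι : Type*} [Fintype ι] (x y : ι → ℝ) : ‖x - x ⊓ y‖ ≤ ‖x - y‖ :=
  (pi_norm_le_iff_of_nonneg (norm_nonneg _)).2 fun i =>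
    calc ‖(x - x ⊓ y) i‖ = ‖x i ⊓ x i - y i ⊓ x i‖ := by
          rw [Pi.sub_apply, Pi.inf_apply, inf_idem, inf_comm (y i)]
      _ ≤ ‖x i - y i‖ := norm_inf_sub_inf_le_norm _ _ _
      _ ≤ ‖x - y‖ := norm_le_pi_norm (x - y) i

lemma abs_lovasz_sub_le {f : Finset (Fin n) → ℝ} (hf : Submodular f) {M : ℝ}
    (hrange : ∀ S, f S ∈ Set.Icc (-M) M) (x y : Fin n → ℝ) :
    |lovasz f x - lovasz f y| ≤ 4 * M * ‖x - y‖ := by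
  have hM : 0 ≤ M := by linarith [(hrange ∅).1, (hrange ∅).2]
  have hx : 2 * M * ‖x - x ⊓ y‖ ≤ 2 * M * ‖x - y‖ := by gcongr; exact norm_sub_inf_le x y
  have hy : 2 * M * ‖y - x ⊓ y‖ ≤ 2 * M * ‖x - y‖ := by
    gcongr
    simpa only [inf_comm, norm_sub_rev y x] using norm_sub_inf_le y x
  have h₁ := lovasz_sub_le_of_le hf hrange (inf_le_left : x ⊓ y ≤ x)
  have h₂ := neg_le_lovasz_sub_of_le hf hrange (inf_le_left : x ⊓ y ≤ x)
  have h₃ := lovasz_sub_le_of_le hf hrange (inf_le_right : x ⊓ y ≤ y)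
  have h₄ := neg_le_lovasz_sub_of_le hf hrange (inf_le_right : x ⊓ y ≤ y)
  rw [abs_le]
  constructor <;> linarith

lemma norm_le_sqrt_sum_sq {ι : Type*} [Fintype ι] (v : ι → ℝ) : ‖v‖ ≤ √(∑ i, v i ^ 2) :=
  (pi_norm_le_iff_of_nonneg (Real.sqrt_nonneg _)).2 fun i =>
    Real.abs_le_sqrt (single_le_sum (f := fun j => v j ^ 2) (fun _ _ => sq_nonneg _) (mem_univ i))

end

theorem stmt3_general {n : ℕ} (M : ℝ) (hM : 0 ≤ M)
    (f : Finset (Fin n) → ℝ) (hf : Submodular f)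
    (hrange : ∀ S : Finset (Fin n), f S ∈ Set.Icc (-M) M)
    (x y : Fin n → ℝ) :
    |lovasz f x - lovasz f y| ≤ 4 * M * Real.sqrt (∑ i, (x i - y i) ^ 2) :=
  (abs_lovasz_sub_le hf hrange x y).trans <|
    mul_le_mul_of_nonneg_left (norm_le_sqrt_sum_sq (x - y)) (by positivity)

/-- The Lovasz extension of a submodular `f : 2^[n] → [−M,M]` is `4M`-Lipschitz with
respect to the Euclidean norm on the cube `[0,1]^n`. -/
theorem stmt3 {n : ℕ} (hn : 1 ≤ n) (M : ℝ) (hM : 0 ≤ M)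
    (f : Finset (Fin n) → ℝ) (hf : Submodular f)
    (hrange : ∀ S : Finset (Fin n), f S ∈ Set.Icc (-M) M)
    (x y : Fin n → ℝ) (hx : ∀ i, x i ∈ Set.Icc (0:ℝ) 1) (hy : ∀ i, y i ∈ Set.Icc (0:ℝ) 1) :
    |lovasz f x - lovasz f y| ≤ 4 * M * Real.sqrt (∑ i, (x i - y i) ^ 2) :=
  stmt3_general M hM f hf hrange x y
end
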